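/- Let n be a positive natural number, f_i, p_i ∈ (0,1) for each i, let s̄ ∈ (0,1), η ∈ (0,1], and suppose (1/n)·∑_{i=1}^n p_i = 1 - η and η > 1/(2 - s̄). Then (s̄·η/n)·∑_{i=1}^n [1 + (f_i - 1)·(2·p_i + s̄·η)] > 0. -/
import Mathlib


theorem stmt_3 (n : ℕ) (hn : 0 < n) (f p : Fin n → ℝ)
    (hf : ∀ i, f i ∈ Set.Ioo (0:ℝ) 1) (hp : ∀ i, p i ∈ Set.Ioo (0:ℝ) 1)
    (sbar η : ℝ) (hs : sbar ∈ Set.Ioo (0:ℝ) 1) (hη : η ∈ Set.Ioc (0:ℝ) 1)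
    (havg : (1 / (n : ℝ)) * ∑ i, p i = 1 - η)
    (hthr : η > 1 / (2 - sbar)) :
    (sbar * η / (n : ℝ)) * ∑ i, (1 + (f i - 1) * (2 * p i + sbar * η)) > 0 := by
  have hnpos : (0:ℝ) < n := Nat.cast_pos.mpr hn
  have hspos := hs.1
  have hηpos := hη.1
  have hsη : 0 < sbar * η := mul_pos hspos hηpos
  have h2s : (0:ℝ) < 2 - sbar := by linarith [hs.2]
  have hthr' : 1 < η * (2 - sbar) := by
    rw [gt_iff_lt, div_lt_iff₀ h2s] at hthr; linarith
  have hsum : ∑ i, p i = (n : ℝ) * (1 - η) := by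
    field_simp at havg; linarith
  have key : ∑ i, (1 - (2 * p i + sbar * η)) < ∑ i, (1 + (f i - 1) * (2 * p i + sbar * η)) := by
    apply Finset.sum_lt_sum_of_nonempty
    · exact Finset.univ_nonempty_iff.mpr ⟨⟨0, hn⟩⟩
    · intro i _
      have hx : 0 < 2 * p i + sbar * η := by nlinarith [(hp i).1]
      nlinarith [(hf i).1]
  have hlhs : ∑ i, (1 - (2 * p i + sbar * η)) = (n : ℝ) * (η * (2 - sbar) - 1) := by
    rw [Finset.sum_sub_distrib, Finset.sum_add_distrib, Finset.sum_const, Finset.sum_const,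
      ← Finset.mul_sum, hsum]
    simp [Finset.card_univ]
    ring
  have : 0 < ∑ i, (1 + (f i - 1) * (2 * p i + sbar * η)) := by
    rw [hlhs] at key
    nlinarith
  positivity
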